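/- arXiv:2304.00479 — 2 statements merged into one kernel-verified Lean document; each statement's English description precedes it below -/
import Mathlib

section
/- Let f : {0,1}^n → ℝ be submodular with f(0) = 0 and let Q_f = {(x,w) ∈ {0,1}^n × ℝ : w ≥ f(x)} be its epigraph. Then the convex hull of Q_f equals the set of all (x,w) ∈ ℝ^n × ℝ satisfying 0 ≤ x_i ≤ 1 for all i ∈ N together with all extended polymatroid inequalities: w ≥ Σ_{i=1}^n π^δ_i x_i for every permutation δ of N, where π^δ_{δ(i)} = f(X^{δ,i}) − f(X^{δ,i−1}), X^{δ,i} = {δ(1),…,δ(i)}, X^{δ,0} = ∅. -/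
open scoped Classical

/-- A set function on the finite ground set `N = {1,…,n}` is submodular. -/
def Submodular {n : ℕ} (f : Finset (Fin n) → ℝ) : Prop :=
  ∀ X Y : Finset (Fin n), f (X ∩ Y) + f (X ∪ Y) ≤ f X + f Y

/-- `X^{δ,i} = {δ(1),…,δ(i)}` (positions `≤ i` in 0-based indexing). -/
def prefixLe {n : ℕ} (δ : Equiv.Perm (Fin n)) (i : Fin n) : Finset (Fin n) :=
  (Finset.univ.filter (fun l : Fin n => l ≤ i)).image δ

/-- `X^{δ,i-1} = {δ(1),…,δ(i-1)}` (positions `< i` in 0-based indexing). -/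
def prefixLt {n : ℕ} (δ : Equiv.Perm (Fin n)) (i : Fin n) : Finset (Fin n) :=
  (Finset.univ.filter (fun l : Fin n => l < i)).image δ

/-- The coefficient vector `π^δ` of the extended polymatroid inequality associated
with a permutation `δ`: `π^δ_{δ(i)} = f(X^{δ,i}) − f(X^{δ,i−1})`. -/
def epiCoef {n : ℕ} (f : Finset (Fin n) → ℝ) (δ : Equiv.Perm (Fin n)) :
    Fin n → ℝ :=
  fun j => f (prefixLe δ (δ.symm j)) - f (prefixLt δ (δ.symm j))

/-- The subset of `N` encoded by a binary vector `x ∈ {0,1}^n`. -/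
noncomputable def toSubset {n : ℕ} (x : Fin n → ℝ) : Finset (Fin n) :=
  Finset.univ.filter (fun i => x i = 1)

/-!
The polyhedron is convex and, by the greedy argument, every extended polymatroid inequality is
valid on the epigraph: adding the elements of `S` in the order `δ`, submodularity bounds each
increment `π^δ_j` by the marginal value of `j` over the part of `S` added so far, so
`∑_{j ∈ S} π^δ_j ≤ f(S)`.
Conversely, given `(x, w)` in the polyhedron, order the coordinates decreasingly by `δ`. Then `x`
is the convex combination of the indicator vectors of the prefixes `X^{δ,m}` with weights
`x_{δ(m)} - x_{δ(m+1)}` (reading `x_{δ(0)} = 1` and `x_{δ(n+1)} = 0`), and by Abel summation the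
same weights combine the values `f(X^{δ,m})` to `∑_i π^δ_i x_i ≤ w`.
-/

open Finset

variable {n : ℕ}

theorem Submodular.sub_le_sub_of_subset {f : Finset (Fin n) → ℝ} (hf : Submodular f)
    {A B : Finset (Fin n)} (hAB : A ⊆ B) {e : Fin n} (he : e ∉ B) :
    f (insert e B) - f B ≤ f (insert e A) - f A := by
  have h := hf (insert e A) B
  rw [insert_inter_of_notMem he, inter_eq_left.mpr hAB, insert_union,
    union_eq_right.mpr hAB] at h
  linarith

theorem mem_image_filter_perm {α : Type*} [Fintype α] [DecidableEq α] {e : Equiv.Perm α}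
    {p : α → Prop} [DecidablePred p] {i : α} :
    i ∈ (univ.filter p).image e ↔ p (e.symm i) := by
  simp [← Equiv.eq_symm_apply]

section PermPrefix

/-- `X^{δ,m}`. -/
def permPrefix (δ : Equiv.Perm (Fin n)) (m : ℕ) : Finset (Fin n) :=
  univ.filter fun i => (δ.symm i : ℕ) < m

variable {δ : Equiv.Perm (Fin n)}

@[simp]
theorem mem_permPrefix {i : Fin n} {m : ℕ} : i ∈ permPrefix δ m ↔ (δ.symm i : ℕ) < m := by
  simp [permPrefix]

@[simp]
theorem permPrefix_zero : permPrefix δ 0 = ∅ := by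
  ext i; simp

theorem permPrefix_of_le {m : ℕ} (h : n ≤ m) : permPrefix δ m = univ := by
  ext i; simpa using (δ.symm i).isLt.trans_le h

theorem permPrefix_succ {m : ℕ} (hm : m < n) :
    permPrefix δ (m + 1) = insert (δ ⟨m, hm⟩) (permPrefix δ m) := by
  ext i
  simp only [mem_permPrefix, mem_insert, ← Equiv.symm_apply_eq, Fin.ext_iff]
  omega

theorem apply_notMem_permPrefix {m : ℕ} (hm : m < n) : δ ⟨m, hm⟩ ∉ permPrefix δ m := by
  simp

theorem epiCoef_apply_perm (f : Finset (Fin n) → ℝ) (k : Fin n) :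
    epiCoef f δ (δ k) = f (permPrefix δ (k + 1)) - f (permPrefix δ k) := by
  have hLe : prefixLe δ k = permPrefix δ (k + 1) := by
    ext i
    simp only [prefixLe, mem_image_filter_perm, mem_permPrefix, Fin.le_def]
    omega
  have hLt : prefixLt δ k = permPrefix δ k := by
    ext i
    simp only [prefixLt, mem_image_filter_perm, mem_permPrefix, Fin.lt_def]
  simp [epiCoef, hLe, hLt]

end PermPrefix

section Greedy

variable {f : Finset (Fin n) → ℝ}

theorem sum_inter_permPrefix_epiCoef_le (hf : Submodular f) (h0 : f ∅ = 0)
    (δ : Equiv.Perm (Fin n)) (S : Finset (Fin n)) :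
    ∀ m ≤ n, ∑ j ∈ S ∩ permPrefix δ m, epiCoef f δ j ≤ f (S ∩ permPrefix δ m)
  | 0, _ => by simp [h0]
  | m + 1, hm => by
    have ih := sum_inter_permPrefix_epiCoef_le hf h0 δ S m (by omega)
    have he := apply_notMem_permPrefix (δ := δ) hm
    have hcoef : epiCoef f δ (δ ⟨m, hm⟩) =
        f (insert (δ ⟨m, hm⟩) (permPrefix δ m)) - f (permPrefix δ m) := by
      rw [← permPrefix_succ hm]
      exact epiCoef_apply_perm f ⟨m, hm⟩
    rw [permPrefix_succ hm]
    by_cases heS : δ ⟨m, hm⟩ ∈ S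
    · rw [inter_insert_of_mem heS, sum_insert fun h => he (mem_inter.mp h).2, hcoef]
      have := hf.sub_le_sub_of_subset (inter_subset_right (s₁ := S)) he
      linarith
    · rwa [inter_insert_of_notMem heS]

theorem sum_epiCoef_le (hf : Submodular f) (h0 : f ∅ = 0) (δ : Equiv.Perm (Fin n))
    (S : Finset (Fin n)) : ∑ j ∈ S, epiCoef f δ j ≤ f S := by
  simpa [permPrefix_of_le le_rfl] using sum_inter_permPrefix_epiCoef_le hf h0 δ S n le_rfl

end Greedy

section Polyhedra

/-- `Q_f`. -/
def binaryEpigraph (f : Finset (Fin n) → ℝ) : Set ((Fin n → ℝ) × ℝ) :=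
  {p | (∀ i, p.1 i = 0 ∨ p.1 i = 1) ∧ f (toSubset p.1) ≤ p.2}

def epiPolyhedron (f : Finset (Fin n) → ℝ) : Set ((Fin n → ℝ) × ℝ) :=
  {p | (∀ i, 0 ≤ p.1 i ∧ p.1 i ≤ 1) ∧
    ∀ δ : Equiv.Perm (Fin n), ∑ i : Fin n, epiCoef f δ i * p.1 i ≤ p.2}

theorem sum_mul_eq_sum_toSubset (c x : Fin n → ℝ) (hx : ∀ i, x i = 0 ∨ x i = 1) :
    ∑ i, c i * x i = ∑ i ∈ toSubset x, c i := by
  rw [toSubset, sum_filter]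
  refine sum_congr rfl fun i _ => ?_
  rcases hx i with h | h <;> simp [h]

theorem toSubset_indicator (S : Finset (Fin n)) :
    toSubset ((S : Set (Fin n)).indicator 1) = S := by
  ext i
  by_cases h : i ∈ S <;> simp [toSubset, h]

variable {f : Finset (Fin n) → ℝ}

theorem binaryEpigraph_subset_epiPolyhedron (hf : Submodular f) (h0 : f ∅ = 0) :
    binaryEpigraph f ⊆ epiPolyhedron f := by
  rintro ⟨x, w⟩ ⟨hx, hfw⟩
  dsimp only at hx hfw
  refine ⟨fun i => ?_, fun δ => ?_⟩
  · rcases hx i with h | h <;> simp [h]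
  · rw [sum_mul_eq_sum_toSubset _ _ hx]
    exact (sum_epiCoef_le hf h0 δ _).trans hfw

theorem convex_epiPolyhedron (f : Finset (Fin n) → ℝ) : Convex ℝ (epiPolyhedron f) := by
  rintro ⟨x, w⟩ ⟨hx, hw⟩ ⟨y, v⟩ ⟨hy, hv⟩ a b ha hb hab
  refine ⟨fun i => ⟨?_, ?_⟩, fun δ => ?_⟩ <;>
    simp only [Prod.smul_mk, Prod.mk_add_mk, Pi.add_apply, Pi.smul_apply, smul_eq_mul]
  · exact add_nonneg (mul_nonneg ha (hx i).1) (mul_nonneg hb (hy i).1)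
  · calc a * x i + b * y i ≤ a + b :=
          add_le_add (mul_le_of_le_one_right ha (hx i).2) (mul_le_of_le_one_right hb (hy i).2)
      _ = 1 := hab
  · have hsplit : ∑ i, epiCoef f δ i * (a * x i + b * y i) =
        a * ∑ i, epiCoef f δ i * x i + b * ∑ i, epiCoef f δ i * y i := by
      simp only [mul_sum, ← sum_add_distrib]
      exact sum_congr rfl fun i _ => by ring
    rw [hsplit]
    exact add_le_add (mul_le_mul_of_nonneg_left (hw δ) ha) (mul_le_mul_of_nonneg_left (hv δ) hb)

end Polyhedra

section Decomposition

theorem exists_perm_antitone {α : Type*} [LinearOrder α] (x : Fin n → α) :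
    ∃ δ : Equiv.Perm (Fin n), Antitone (x ∘ δ) :=
  ⟨Tuple.sort (OrderDual.toDual ∘ x), fun _ _ hab =>
    OrderDual.toDual_le_toDual.mp (Tuple.monotone_sort (OrderDual.toDual ∘ x) hab)⟩

theorem sum_range_sub_succ_mul {R : Type*} [CommRing R] (z F : ℕ → R) (n : ℕ) :
    ∑ m ∈ range (n + 1), (z m - z (m + 1)) * F m =
      z 0 * F 0 - z (n + 1) * F n + ∑ m ∈ range n, z (m + 1) * (F (m + 1) - F m) := by
  induction n with
  | zero => simp; ring
  | succ n ih => rw [sum_range_succ, ih, sum_range_succ]; ring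

def threshold (x : Fin n → ℝ) (δ : Equiv.Perm (Fin n)) : ℕ → ℝ
  | 0 => 1
  | m + 1 => if h : m < n then x (δ ⟨m, h⟩) else 0

variable {x : Fin n → ℝ} {δ : Equiv.Perm (Fin n)}

theorem threshold_antitone (hx : ∀ i, 0 ≤ x i ∧ x i ≤ 1) (hδ : Antitone (x ∘ δ)) :
    Antitone (threshold x δ) := by
  refine antitone_nat_of_succ_le fun m => ?_
  rcases m with _ | m
  · simp only [threshold]
    split_ifs
    exacts [(hx _).2, zero_le_one]
  · simp only [threshold]
    split_ifs with h1 h2 h2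
    · exact hδ (Fin.mk_le_mk.mpr m.le_succ)
    · omega
    · exact (hx _).1
    · exact le_rfl

theorem threshold_add_one_symm (i : Fin n) : threshold x δ ((δ.symm i : ℕ) + 1) = x i := by
  simp [threshold]

theorem threshold_top : threshold x δ (n + 1) = 0 := by
  simp [threshold]

theorem sum_threshold_sub :
    ∑ m ∈ range (n + 1), (threshold x δ m - threshold x δ (m + 1)) = 1 := by
  rw [sum_range_sub', threshold_top]
  simp [threshold]

theorem sum_threshold_sub_smul_indicator :
    ∑ m ∈ range (n + 1), (threshold x δ m - threshold x δ (m + 1)) •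
      (permPrefix δ m : Set (Fin n)).indicator 1 = x := by
  ext i
  have hfilter : (range (n + 1)).filter (fun m => (δ.symm i : ℕ) < m) =
      Ico ((δ.symm i : ℕ) + 1) (n + 1) := by
    ext m
    simp only [mem_filter, mem_range, mem_Ico]
    omega
  simp only [Finset.sum_apply, Pi.smul_apply, Set.indicator_apply, mem_coe, mem_permPrefix,
    Pi.one_apply, smul_eq_mul, mul_ite, mul_one, mul_zero]
  rw [← sum_filter, hfilter, ← neg_neg (∑ a ∈ _, _), ← sum_neg_distrib]
  simp only [neg_sub]
  rw [sum_Ico_sub _ (by omega), threshold_top, threshold_add_one_symm, zero_sub, neg_neg]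

theorem sum_epiCoef_mul_eq_sum_threshold {f : Finset (Fin n) → ℝ} (h0 : f ∅ = 0) :
    ∑ i, epiCoef f δ i * x i =
      ∑ m ∈ range (n + 1), (threshold x δ m - threshold x δ (m + 1)) * f (permPrefix δ m) := by
  rw [sum_range_sub_succ_mul, permPrefix_zero, h0, threshold_top,
    ← Fin.sum_univ_eq_sum_range
      (fun m => threshold x δ (m + 1) * (f (permPrefix δ (m + 1)) - f (permPrefix δ m))),
    ← Equiv.sum_comp δ]
  simp only [mul_zero, zero_mul, sub_zero, zero_add]
  refine sum_congr rfl fun k _ => ?_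
  rw [epiCoef_apply_perm, ← threshold_add_one_symm (x := x) (δ := δ) (δ k),
    Equiv.symm_apply_apply, mul_comm]

theorem epiPolyhedron_subset_convexHull {f : Finset (Fin n) → ℝ} (h0 : f ∅ = 0) :
    epiPolyhedron f ⊆ convexHull ℝ (binaryEpigraph f) := by
  rintro ⟨x, w⟩ ⟨hx, hw⟩
  obtain ⟨δ, hδ⟩ := exists_perm_antitone x
  set weight : ℕ → ℝ := fun m => threshold x δ m - threshold x δ (m + 1)
  set c := w - ∑ i, epiCoef f δ i * x i
  have hc : 0 ≤ c := sub_nonneg.mpr (hw δ)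
  have hsum : ∑ m ∈ range (n + 1), weight m = 1 := sum_threshold_sub
  have hval : ∑ i, epiCoef f δ i * x i = ∑ m ∈ range (n + 1), weight m * f (permPrefix δ m) :=
    sum_epiCoef_mul_eq_sum_threshold h0
  have hdecomp : (x, w) = ∑ m ∈ range (n + 1),
      weight m • ((permPrefix δ m : Set (Fin n)).indicator 1, f (permPrefix δ m) + c) := by
    refine Prod.ext ?_ ?_
    · rw [Prod.fst_sum]
      exact sum_threshold_sub_smul_indicator.symm
    · simp only [Prod.snd_sum, Prod.smul_snd, smul_eq_mul, mul_add, sum_add_distrib, ← sum_mul,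
        hsum, c, hval]
      ring
  rw [hdecomp]
  refine (convex_convexHull ℝ _).sum_mem
    (fun m _ => sub_nonneg.mpr (threshold_antitone hx hδ m.le_succ)) hsum
    fun m _ => subset_convexHull ℝ _ ⟨fun i => ?_, ?_⟩
  · by_cases h : i ∈ permPrefix δ m <;> simp [h]
  · simpa [toSubset_indicator] using hc

end Decomposition

theorem convexHull_epigraph_eq_EPI_polyhedron_general {n : ℕ}
    (f : Finset (Fin n) → ℝ) (hf : Submodular f) (h0 : f ∅ = 0) :
    convexHull ℝ
        {p : (Fin n → ℝ) × ℝ |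
          (∀ i, p.1 i = 0 ∨ p.1 i = 1) ∧ f (toSubset p.1) ≤ p.2} =
      {p : (Fin n → ℝ) × ℝ |
        (∀ i, 0 ≤ p.1 i ∧ p.1 i ≤ 1) ∧
        ∀ δ : Equiv.Perm (Fin n), ∑ i : Fin n, epiCoef f δ i * p.1 i ≤ p.2} :=
  (convexHull_min (binaryEpigraph_subset_epiPolyhedron hf h0) (convex_epiPolyhedron f)).antisymm
    (epiPolyhedron_subset_convexHull h0)

/-- For submodular `f` with `f(0) = 0`, the convex hull of the epigraph
`Q_f = {(x,w) ∈ {0,1}^n × ℝ : w ≥ f(x)}` equals the set of `(x,w)` satisfying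
`0 ≤ x ≤ 1` and all extended polymatroid inequalities `w ≥ Σ_i π^δ_i x_i`. -/
theorem convexHull_epigraph_eq_EPI_polyhedron {n : ℕ} (hn : 0 < n)
    (f : Finset (Fin n) → ℝ) (hf : Submodular f) (h0 : f ∅ = 0) :
    convexHull ℝ
        {p : (Fin n → ℝ) × ℝ |
          (∀ i, p.1 i = 0 ∨ p.1 i = 1) ∧ f (toSubset p.1) ≤ p.2} =
      {p : (Fin n → ℝ) × ℝ |
        (∀ i, 0 ≤ p.1 i ∧ p.1 i ≤ 1) ∧
        ∀ δ : Equiv.Perm (Fin n), ∑ i : Fin n, epiCoef f δ i * p.1 i ≤ p.2} :=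
  convexHull_epigraph_eq_EPI_polyhedron_general f hf h0
end

section
/- Let f : (k+1)^N → ℝ be a k-submodular function with f(∅,…,∅) = 0. Then for every S ∈ (k+1)^N and every X ∈ (k+1)^N with binary encoding x (x_i^q = 1 iff i ∈ X_q), the k-submodular inequality associated with S is valid: f(X) ≤ f(S) + Σ_{q=1}^k Σ_{i ∉ ∪_{r=1}^k S_r} ρ_{q,i}(S) x_i^q + Σ_{q=1}^k Σ_{p ∈ {1,…,k}\{q}} Σ_{i ∈ S_p} ρ_{q,i}(∅,…,∅) x_i^q − Σ_{q=1}^k Σ_{i ∈ S_q} ξ_i^q (1 − x_i^q). -/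
/-!
Walk from `S` to `X` in three moves. First give each element of `X` outside the support of `S`
its `X`-label: since `ρ_{q,i}(W)` can only decrease as `W` grows (k-submodularity applied to
`W + i` and the larger base), this raises `f` by at most `Σ ρ_{q,i}(S)`. Next remove each element
of `S` whose `S`-label is not its `X`-label: each removal lowers `f` by at least `ξ_i^q`, since a
base avoiding `i` can be completed to one with support `N \ {i}` without raising the marginal.
Finally give the elements of `X` just removed their `X`-labels, at a cost of at most `ρ_{q,i}(∅)`
each.

Below, `⊔`, `⊓`, `\` and `≤` on `Fin k → Finset (Fin n)` are the pointwise lattice operations;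
the paper's `⊔` is `kSup`.
-/

/-- A `k`-set: a `k`-tuple of pairwise disjoint subsets of `N = {1,…,n}`. -/
def IsKSet {n k : ℕ} (S : Fin k → Finset (Fin n)) : Prop :=
  ∀ p q : Fin k, p ≠ q → Disjoint (S p) (S q)

/-- Component-wise intersection `X ⊓ Y` of two `k`-sets. -/
def kInf {n k : ℕ} (X Y : Fin k → Finset (Fin n)) : Fin k → Finset (Fin n) :=
  fun q => X q ∩ Y q

/-- The operation `X ⊔ Y`: `(X ⊔ Y)_q = (X_q ∪ Y_q) \ ∪_{p ≠ q}(X_p ∪ Y_p)`. -/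
def kSup {n k : ℕ} (X Y : Fin k → Finset (Fin n)) : Fin k → Finset (Fin n) :=
  fun q => (X q ∪ Y q) \ (Finset.univ.erase q).biUnion (fun p => X p ∪ Y p)

/-- `f : (k+1)^N → ℝ` is `k`-submodular if
`f(X) + f(Y) ≥ f(X ⊓ Y) + f(X ⊔ Y)` for all `k`-sets `X, Y`. -/
def KSubmodular {n k : ℕ} (f : (Fin k → Finset (Fin n)) → ℝ) : Prop :=
  ∀ X Y : Fin k → Finset (Fin n), IsKSet X → IsKSet Y →
    f (kInf X Y) + f (kSup X Y) ≤ f X + f Y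

/-- The marginal return `ρ_{q,i}(X) = f(X_1,…,X_q ∪ {i},…,X_k) − f(X)`. -/
def kMarginal {n k : ℕ} (f : (Fin k → Finset (Fin n)) → ℝ) (q : Fin k)
    (i : Fin n) (X : Fin k → Finset (Fin n)) : ℝ :=
  f (Function.update X q (insert i (X q))) - f X

/-- `ξ_i^q = min{ ρ_{q,i}(S) : S ∈ (k+1)^{N\{i}}, ∪_p S_p = N \ {i} }`. -/
noncomputable def kXi {n k : ℕ} (f : (Fin k → Finset (Fin n)) → ℝ)
    (i : Fin n) (q : Fin k) : ℝ :=
  sInf { r : ℝ | ∃ S : Fin k → Finset (Fin n), IsKSet S ∧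
    Finset.univ.biUnion S = Finset.univ \ {i} ∧ r = kMarginal f q i S }


open Finset Function

variable {n k : ℕ}

theorem isKSet_iff {X : Fin k → Finset (Fin n)} :
    IsKSet X ↔ ∀ i p q, i ∈ X p → i ∈ X q → p = q := by
  refine ⟨fun hX i p q hp hq => by_contra fun h => disjoint_left.mp (hX p q h) hp hq,
    fun h p q hpq => disjoint_left.mpr fun i hp hq => hpq (h i p q hp hq)⟩

theorem IsKSet.mono {X Y : Fin k → Finset (Fin n)} (hY : IsKSet Y) (h : X ≤ Y) : IsKSet X :=
  fun p q hpq => (hY p q hpq).mono (h p) (h q)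

theorem IsKSet.update_of_disjoint {W : Fin k → Finset (Fin n)} (hW : IsKSet W) {q : Fin k}
    {A : Finset (Fin n)} (hsum_new : ∀ p ≠ q, Disjoint A (W p)) : IsKSet (update W q A) := by
  intro p r hpr
  rcases eq_or_ne p q with rfl | hp
  · rw [update_self, update_of_ne hpr.symm]
    exact hsum_new r hpr.symm
  rcases eq_or_ne r q with rfl | hr
  · rw [update_self, update_of_ne hp]
    exact (hsum_new p hp).symm
  · rw [update_of_ne hp, update_of_ne hr]
    exact hW p r hpr

theorem IsKSet.update_insert {W : Fin k → Finset (Fin n)} (hW : IsKSet W) {i : Fin n}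
    (hi : ∀ p, i ∉ W p) (q : Fin k) : IsKSet (update W q (insert i (W q))) :=
  hW.update_of_disjoint fun p hp => disjoint_insert_left.mpr ⟨hi p, hW q p hp.symm⟩

theorem kSup_eq_sup {X Y : Fin k → Finset (Fin n)} (h : IsKSet (X ⊔ Y)) : kSup X Y = X ⊔ Y :=
  funext fun q => sdiff_eq_self_iff_disjoint.mpr <|
    (disjoint_biUnion_left _ _ _).mpr fun p hp => h p q (ne_of_mem_erase hp)

theorem KSubmodular.map_inf_add_map_sup_le {f : (Fin k → Finset (Fin n)) → ℝ}
    (hf : KSubmodular f) {X Y : Fin k → Finset (Fin n)} (h : IsKSet (X ⊔ Y)) :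
    f (X ⊓ Y) + f (X ⊔ Y) ≤ f X + f Y := by
  rw [← kSup_eq_sup h]
  exact hf X Y (h.mono le_sup_left) (h.mono le_sup_right)

theorem map_update_insert_eq_add_kMarginal (f : (Fin k → Finset (Fin n)) → ℝ)
    (V : Fin k → Finset (Fin n)) (q : Fin k) (i : Fin n) :
    f (update V q (insert i (V q))) = f V + kMarginal f q i V := by
  rw [kMarginal, add_sub_cancel]

theorem kMarginal_le_of_le {f : (Fin k → Finset (Fin n)) → ℝ} (hf : KSubmodular f)
    {W W' : Fin k → Finset (Fin n)} (hW' : IsKSet W') (hle : W ≤ W') {i : Fin n}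
    (hi : ∀ p, i ∉ W' p) (q : Fin k) :
    kMarginal f q i W' ≤ kMarginal f q i W := by
  have hsup : update W q (insert i (W q)) ⊔ W' = update W' q (insert i (W' q)) := by
    funext p
    rcases eq_or_ne p q with rfl | hpq
    · simp only [Pi.sup_apply, update_self, sup_eq_union, insert_union, union_eq_right.mpr (hle p)]
    · simp only [Pi.sup_apply, update_of_ne hpq, sup_eq_right.mpr (hle p)]
  have hinf : update W q (insert i (W q)) ⊓ W' = W := by
    funext p
    rcases eq_or_ne p q with rfl | hpq
    · simp only [Pi.inf_apply, update_self, inf_eq_inter, insert_inter_of_notMem (hi p),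
        inter_eq_left.mpr (hle p)]
    · simp only [Pi.inf_apply, update_of_ne hpq, inf_eq_left.mpr (hle p)]
  have := hf.map_inf_add_map_sup_le (hsup ▸ hW'.update_insert hi q)
  rw [hsup, hinf] at this
  simp only [kMarginal]
  linarith

theorem kXi_le_kMarginal {f : (Fin k → Finset (Fin n)) → ℝ} (hf : KSubmodular f)
    {W : Fin k → Finset (Fin n)} (hW : IsKSet W) {i : Fin n} (hi : ∀ p, i ∉ W p) (q : Fin k) :
    kXi f i q ≤ kMarginal f q i W := by
  set R := univ.filter fun j => j ≠ i ∧ ∀ p, j ∉ W p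
  set W' := update W q (W q ∪ R)
  have hW' : IsKSet W' := hW.update_of_disjoint fun p hp =>
    disjoint_union_left.mpr ⟨hW q p hp.symm, disjoint_left.mpr fun j hj => (mem_filter.mp hj).2.2 p⟩
  have hle : W ≤ W' := fun p j hj => by
    rcases eq_or_ne p q with rfl | hpq
    · simp [W', hj]
    · simp [W', hpq, hj]
  have hiW' : ∀ p, i ∉ W' p := fun p => by
    rcases eq_or_ne p q with rfl | hpq
    · simp [W', R, hi]
    · simp [W', hpq, hi]
  have hsupp : univ.biUnion W' = univ \ {i} := by
    ext j
    simp only [mem_biUnion, mem_univ, true_and, mem_sdiff, mem_singleton]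
    refine ⟨fun ⟨p, hp⟩ hj => hiW' p (hj ▸ hp), fun hj => ?_⟩
    by_cases hjW : ∃ p, j ∈ W p
    · obtain ⟨p, hp⟩ := hjW
      exact ⟨p, hle p hp⟩
    · rw [not_exists] at hjW
      exact ⟨q, by simp [W', R, hj, hjW]⟩
  have hbdd : BddBelow {r | ∃ T, IsKSet T ∧ univ.biUnion T = univ \ {i} ∧ r = kMarginal f q i T} :=
    (Set.finite_range (kMarginal f q i)).bddBelow.mono <| by rintro _ ⟨T, -, -, rfl⟩; exact ⟨T, rfl⟩
  calc kXi f i q ≤ kMarginal f q i W' := csInf_le hbdd ⟨W', hW', hsupp, rfl⟩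
    _ ≤ kMarginal f q i W := kMarginal_le_of_le hf hW' hle hiW' q

theorem map_sup_le_of_kMarginal_le (f : (Fin k → Finset (Fin n)) → ℝ)
    {W L : Fin k → Finset (Fin n)} (hWL : IsKSet (W ⊔ L)) (hdisj : ∀ ⦃q i⦄, i ∈ L q → ∀ p, i ∉ W p)
    (g : Fin k → Fin n → ℝ)
    (hg : ∀ V, IsKSet V → W ≤ V → ∀ q, ∀ i ∈ L q, (∀ p, i ∉ V p) → kMarginal f q i V ≤ g q i) :
    f (W ⊔ L) ≤ f W + ∑ q, ∑ i ∈ L q, g q i := by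
  -- add the elements of `L` one at a time: induction on the set `D` of those already added
  suffices h : ∀ D : Finset (Fin n),
      f (W ⊔ fun p => L p ∩ D) ≤ f W + ∑ q, ∑ i ∈ L q ∩ D, g q i by
    simpa using h univ
  intro D
  induction D using Finset.induction_on with
  | empty => simp [show (fun _ => ∅ : Fin k → Finset (Fin n)) = ⊥ from rfl]
  | @insert a D ha ih =>
    set V := W ⊔ fun p => L p ∩ D
    by_cases haL : ∃ q, a ∈ L q
    · obtain ⟨q, hq⟩ := haL
      have hL : ∀ p, a ∈ L p ↔ p = q := fun p =>
        ⟨fun hp => isKSet_iff.mp (hWL.mono le_sup_right) a p q hp hq, fun h => h ▸ hq⟩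
      have hV : IsKSet V := hWL.mono (sup_le_sup_left (fun p => inter_subset_left) W)
      have haV : ∀ p, a ∉ V p := fun p => by simp [V, ha, hdisj hq p]
      have hstep : (W ⊔ fun p => L p ∩ insert a D) = update V q (insert a (V q)) := by
        ext p j
        rcases eq_or_ne p q with rfl | hpq
        · rcases eq_or_ne j a with rfl | hja <;> simp [V, *]
        · simp [V, hL, hpq]
      have hsum : ∑ p, ∑ i ∈ L p ∩ insert a D, g p i
          = ∑ p, ∑ i ∈ L p ∩ D, g p i + g q a := by
        rw [← Fintype.sum_ite_eq' q (g · a), ← sum_add_distrib]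
        refine sum_congr rfl fun p _ => ?_
        rcases eq_or_ne p q with rfl | hpq
        · rw [inter_insert_of_mem hq, sum_insert fun h => ha (mem_inter.mp h).2, if_pos rfl,
            add_comm]
        · rw [inter_insert_of_notMem ((hL p).not.mpr hpq), if_neg hpq, add_zero]
      rw [hstep, map_update_insert_eq_add_kMarginal f, hsum]
      linarith [hg V hV le_sup_left q a hq haV]
    · have hL : ∀ p, L p ∩ insert a D = L p ∩ D := fun p =>
        inter_insert_of_notMem (not_exists.mp haL p)
      simpa only [hL] using ih

theorem le_map_sup_of_le_kMarginal (f : (Fin k → Finset (Fin n)) → ℝ)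
    {W L : Fin k → Finset (Fin n)} (hWL : IsKSet (W ⊔ L)) (hdisj : ∀ ⦃q i⦄, i ∈ L q → ∀ p, i ∉ W p)
    (g : Fin k → Fin n → ℝ)
    (hg : ∀ V, IsKSet V → W ≤ V → ∀ q, ∀ i ∈ L q, (∀ p, i ∉ V p) → g q i ≤ kMarginal f q i V) :
    f W + ∑ q, ∑ i ∈ L q, g q i ≤ f (W ⊔ L) := by
  have := map_sup_le_of_kMarginal_le (-f) hWL hdisj (-g) fun V hV hWV q i hi hiV => by
    have h := hg V hV hWV q i hi hiV
    simp only [kMarginal, Pi.neg_apply] at h ⊢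
    linarith
  simp only [Pi.neg_apply, sum_neg_distrib] at this
  linarith

namespace KSubmodular

variable {f : (Fin k → Finset (Fin n)) → ℝ}

theorem map_sup_le (hf : KSubmodular f) {B W L : Fin k → Finset (Fin n)} (hBW : B ≤ W)
    (hWL : IsKSet (W ⊔ L)) (hdisj : ∀ ⦃q i⦄, i ∈ L q → ∀ p, i ∉ W p) :
    f (W ⊔ L) ≤ f W + ∑ q, ∑ i ∈ L q, kMarginal f q i B :=
  map_sup_le_of_kMarginal_le f hWL hdisj _ fun _ hV hWV q _ _ hiV =>
    kMarginal_le_of_le hf hV (hBW.trans hWV) hiV q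

theorem le_map_sup (hf : KSubmodular f) {W L : Fin k → Finset (Fin n)} (hWL : IsKSet (W ⊔ L))
    (hdisj : ∀ ⦃q i⦄, i ∈ L q → ∀ p, i ∉ W p) :
    f W + ∑ q, ∑ i ∈ L q, kXi f i q ≤ f (W ⊔ L) :=
  le_map_sup_of_le_kMarginal f hWL hdisj _ fun _ hV _ q _ _ hiV => kXi_le_kMarginal hf hV hiV q

end KSubmodular

section Decomposition

variable (S X : Fin k → Finset (Fin n))

def newPart : Fin k → Finset (Fin n) := fun q => (univ \ univ.biUnion S) ∩ X q

def relabelledPart : Fin k → Finset (Fin n) := fun q => (univ.erase q).biUnion S ∩ X q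

variable {S X}

theorem mem_newPart {q : Fin k} {i : Fin n} :
    i ∈ newPart S X q ↔ (∀ p, i ∉ S p) ∧ i ∈ X q := by
  simp [newPart]

theorem mem_relabelledPart {q : Fin k} {i : Fin n} :
    i ∈ relabelledPart S X q ↔ (∃ p ≠ q, i ∈ S p) ∧ i ∈ X q := by
  simp [relabelledPart]

variable (S X)

theorem inf_sup_newPart_sup_relabelledPart : S ⊓ X ⊔ newPart S X ⊔ relabelledPart S X = X := by
  ext p j
  simp only [Pi.sup_apply, Pi.inf_apply, sup_eq_union, inf_eq_inter, mem_union, mem_inter,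
    mem_newPart, mem_relabelledPart]
  grind

theorem inf_sup_newPart_sup_sdiff : S ⊓ X ⊔ newPart S X ⊔ S \ X = S ⊔ newPart S X := by
  ext p j
  simp only [Pi.sup_apply, Pi.inf_apply, Pi.sdiff_apply, sup_eq_union, inf_eq_inter, mem_union,
    mem_inter, mem_sdiff, mem_newPart]
  tauto

variable {S X}

theorem notMem_of_mem_newPart ⦃q : Fin k⦄ ⦃i : Fin n⦄ (hi : i ∈ newPart S X q) (p : Fin k) :
    i ∉ S p :=
  (mem_newPart.mp hi).1 p

theorem IsKSet.sup_newPart (hS : IsKSet S) (hX : IsKSet X) : IsKSet (S ⊔ newPart S X) := by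
  refine isKSet_iff.mpr fun j p r hp hr => ?_
  simp only [Pi.sup_apply, sup_eq_union, mem_union, mem_newPart] at hp hr
  rcases hp with hp | hp <;> rcases hr with hr | hr
  · exact isKSet_iff.mp hS j p r hp hr
  · exact absurd hp (hr.1 p)
  · exact absurd hr (hp.1 r)
  · exact isKSet_iff.mp hX j p r hp.2 hr.2

theorem IsKSet.notMem_of_mem_relabelledPart (hS : IsKSet S) (hX : IsKSet X) ⦃q : Fin k⦄
    ⦃i : Fin n⦄ (hi : i ∈ relabelledPart S X q) (p : Fin k) : i ∉ (S ⊓ X ⊔ newPart S X) p := by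
  obtain ⟨⟨r, hrq, hr⟩, hiX⟩ := mem_relabelledPart.mp hi
  simp only [Pi.sup_apply, Pi.inf_apply, sup_eq_union, inf_eq_inter, mem_union, mem_inter,
    mem_newPart]
  rintro (⟨hSp, hXp⟩ | ⟨hnS, -⟩)
  · obtain rfl := isKSet_iff.mp hX i p q hXp hiX
    exact hrq (isKSet_iff.mp hS i r p hr hSp)
  · exact hnS r hr

theorem IsKSet.notMem_of_mem_sdiff (hS : IsKSet S) ⦃q : Fin k⦄ ⦃i : Fin n⦄
    (hi : i ∈ (S \ X) q) (p : Fin k) : i ∉ (S ⊓ X ⊔ newPart S X) p := by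
  obtain ⟨hSq, hXq⟩ := mem_sdiff.mp hi
  simp only [Pi.sup_apply, Pi.inf_apply, sup_eq_union, inf_eq_inter, mem_union, mem_inter,
    mem_newPart]
  rintro (⟨hSp, hXp⟩ | ⟨hnS, -⟩)
  · obtain rfl := isKSet_iff.mp hS i p q hSp hSq
    exact hXq hXp
  · exact hnS q hSq

end Decomposition

theorem kSubmodular_inequality_valid_general {n k : ℕ}
    (f : (Fin k → Finset (Fin n)) → ℝ) (hf : KSubmodular f)
    (S X : Fin k → Finset (Fin n)) (hS : IsKSet S) (hX : IsKSet X) :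
    f X ≤ f S
      + (∑ q : Fin k, ∑ i ∈ Finset.univ \ Finset.univ.biUnion S,
          kMarginal f q i S * (if i ∈ X q then 1 else 0))
      + (∑ q : Fin k, ∑ p ∈ Finset.univ.erase q, ∑ i ∈ S p,
          kMarginal f q i (fun _ => ∅) * (if i ∈ X q then 1 else 0))
      - ∑ q : Fin k, ∑ i ∈ S q,
          kXi f i q * (1 - (if i ∈ X q then 1 else 0)) := by
  have hX_eq := inf_sup_newPart_sup_relabelledPart S X
  have hS_eq := inf_sup_newPart_sup_sdiff S X
  have hSN := hS.sup_newPart hX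
  have hadd := hf.map_sup_le le_rfl hSN notMem_of_mem_newPart
  have hremove := hf.le_map_sup (by rwa [hS_eq]) hS.notMem_of_mem_sdiff
  have hrelabel := hf.map_sup_le (fun p => empty_subset _) (by rwa [hX_eq])
    (hS.notMem_of_mem_relabelledPart hX)
  rw [hS_eq] at hremove
  rw [hX_eq] at hrelabel
  have hsum_new : ∀ q, ∑ i ∈ univ \ univ.biUnion S, kMarginal f q i S * (if i ∈ X q then 1 else 0)
      = ∑ i ∈ newPart S X q, kMarginal f q i S := fun q => by
    simp only [mul_ite, mul_one, mul_zero, sum_ite_mem, newPart]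
  have hsum_relabelled : ∀ q, ∑ p ∈ univ.erase q, ∑ i ∈ S p,
      kMarginal f q i (fun _ => ∅) * (if i ∈ X q then 1 else 0)
      = ∑ i ∈ relabelledPart S X q, kMarginal f q i (fun _ => ∅) := fun q => by
    rw [← sum_biUnion fun p _ r _ hpr => hS p r hpr]
    simp only [mul_ite, mul_one, mul_zero, sum_ite_mem, relabelledPart]
  have hsum_removed : ∀ q, ∑ i ∈ S q, kXi f i q * (1 - (if i ∈ X q then 1 else 0))
      = ∑ i ∈ (S \ X) q, kXi f i q := fun q => by
    simp only [mul_sub, mul_one, mul_ite, mul_zero, sum_sub_distrib, sum_ite_mem, Pi.sdiff_apply,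
      ← sum_sdiff_eq_sub inter_subset_left, sdiff_inter_self_left]
  simp only [hsum_new, hsum_relabelled, hsum_removed]
  linarith

/-- For a `k`-submodular `f` with `f(∅,…,∅) = 0`, every `k`-submodular
inequality is valid: for all `k`-sets `S` and `X` (with binary encoding
`x_i^q = 1` iff `i ∈ X_q`),
`f(X) ≤ f(S) + Σ_q Σ_{i ∉ ∪_r S_r} ρ_{q,i}(S) x_i^q
      + Σ_q Σ_{p ≠ q} Σ_{i ∈ S_p} ρ_{q,i}(∅,…,∅) x_i^q
      − Σ_q Σ_{i ∈ S_q} ξ_i^q (1 − x_i^q)`. -/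
theorem kSubmodular_inequality_valid {n k : ℕ} (hn : 0 < n) (hk : 0 < k)
    (f : (Fin k → Finset (Fin n)) → ℝ) (hf : KSubmodular f)
    (h0 : f (fun _ => ∅) = 0)
    (S X : Fin k → Finset (Fin n)) (hS : IsKSet S) (hX : IsKSet X) :
    f X ≤ f S
      + (∑ q : Fin k, ∑ i ∈ Finset.univ \ Finset.univ.biUnion S,
          kMarginal f q i S * (if i ∈ X q then 1 else 0))
      + (∑ q : Fin k, ∑ p ∈ Finset.univ.erase q, ∑ i ∈ S p,
          kMarginal f q i (fun _ => ∅) * (if i ∈ X q then 1 else 0))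
      - ∑ q : Fin k, ∑ i ∈ S q,
          kXi f i q * (1 - (if i ∈ X q then 1 else 0)) :=
  kSubmodular_inequality_valid_general f hf S X hS hX
end
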